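/- arXiv:2004.11439 — 2 statements merged into one kernel-verified Lean document; each statement's English description precedes it below -/
import Mathlib

section
/- In the time-optimal algorithm, no two non-Byzantine robots settle at the same node: under the settling rule where a robot r settles at node v in round k if and only if (i) no robot not identified by r as Byzantine claims to be settled at v, and (ii) no robot with smaller ID, not identified by r as Byzantine, also decides to settle at v in round k (decisions computed in ascending ID order), any two distinct non-Byzantine robots settle at distinct nodes. -/
/-- In the time-optimal algorithm no two non-Byzantine robots settle at the same node:
with the settling rule (a robot `r` at the node settles iff every claimant is suspected
Byzantine by `r` and every smaller-ID robot at the node that settles is suspected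
Byzantine by `r`, decisions computed in ascending ID order), at most one non-Byzantine
robot among those present settles, and none settles if a non-Byzantine robot already
claims the node. -/
theorem stmt13 (Robot : Type) (id : Robot → ℕ) (hid : Function.Injective id)
    (Byz : Set Robot) (B : Robot → Set Robot)
    (hB : ∀ r s : Robot, r ∉ Byz → s ∉ Byz → s ∉ B r)
    (C G : Set Robot) (settles : Robot → Prop)
    (hrule : ∀ r ∈ G, (settles r ↔
      ((∀ c ∈ C, c ∈ B r) ∧ ∀ s ∈ G, id s < id r → settles s → s ∈ B r))) :
    (∀ r ∈ G, r ∉ Byz → settles r → ∀ s ∈ G, s ∉ Byz → settles s → r = s) ∧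
    (∀ c ∈ C, c ∉ Byz → ∀ r ∈ G, r ∉ Byz → ¬ settles r) := by
  constructor
  · intro r hr hrB hrs s hs hsB hss
    by_contra hne
    rcases Nat.lt_or_ge (id r) (id s) with h | h
    · exact hB s r hsB hrB (((hrule s hs).1 hss).2 r hr h hrs)
    · have h' : id s < id r := lt_of_le_of_ne h (fun e => hne (hid e.symm))
      exact hB r s hrB hsB (((hrule r hr).1 hrs).2 s hs h' hss)
  · intro c hc hcB r hr hrB hrs
    exact hB r c hrB hcB (((hrule r hr).1 hrs).1 c hc)
end

section
/- Progress lemma for the time-optimal algorithm: if a non-Byzantine robot r does not settle at the node it occupies in round k, then r records in A_r[k] the ID of at least one robot that r does not currently consider Byzantine; since each distinct recorded 'trusted' robot is recorded at most once before being revealed as Byzantine, and there are n robots total, r settles within n rounds. Formally: if a function A : Fin n → Finset Robot assigns to each round a nonempty set of robots not in r's suspect set at that round, and the suspect sets are monotone increasing and recorded robots re-encountered are added to the suspect set, then r cannot fail to settle for n rounds. -/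
/-- Progress lemma for the time-optimal algorithm: suppose a non-settled robot `r`
records in each of `n` rounds a nonempty set `A k` of robots (never itself) currently
not in its suspect set `B k`; suspect sets grow monotonically and any recorded robot
re-encountered in a later round is by then suspected. With `n` robots in total this is
impossible, so `r` settles within `n` rounds. -/
theorem stmt14 (Robot : Type) [Fintype Robot] [DecidableEq Robot] (n : ℕ)
    (hcard : Fintype.card Robot = n) (r : Robot) (A B : ℕ → Finset Robot)
    (hmono : Monotone B)
    (hne : ∀ k < n, (A k).Nonempty)
    (hdisj : ∀ k < n, ∀ s ∈ A k, s ∉ B k)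
    (hre : ∀ k < n, ∀ k' < n, k < k' → ∀ s ∈ A k, s ∈ A k' → s ∈ B k')
    (hself : ∀ k < n, r ∉ A k) : False := by
  have hsel : ∀ k : Fin n, (A k).Nonempty := fun k => hne k k.2
  set f : Fin n → {x : Robot // x ≠ r} := fun k =>
    ⟨(hsel k).choose, fun h => hself k k.2 (h ▸ (hsel k).choose_spec)⟩ with hf
  have hinj : Function.Injective f := by
    intro a b hab
    have heq : (hsel a).choose = (hsel b).choose := congrArg Subtype.val hab
    by_contra hab'
    rcases Ne.lt_or_gt hab' with h | h
    · exact hdisj b b.2 (hsel a).choose (heq ▸ (hsel b).choose_spec)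
        (hre a a.2 b b.2 h _ (hsel a).choose_spec (heq ▸ (hsel b).choose_spec))
    · exact hdisj a a.2 (hsel b).choose (heq ▸ (hsel a).choose_spec)
        (hre b b.2 a a.2 h _ (hsel b).choose_spec (heq ▸ (hsel a).choose_spec))
  have hn : 0 < n := hcard ▸ Fintype.card_pos_iff.mpr ⟨r⟩
  have := Fintype.card_le_of_injective f hinj
  rw [Fintype.card_fin, Fintype.card_subtype_compl, Fintype.card_subtype_eq, hcard] at this
  omega
end
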